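/- Let f, h : S² → ℂ be continuous, let ρ : SO(3) → GLₙ(ℂ) be a continuous group homomorphism, and let R₀ ∈ SO(3). Define the Fourier matrix of the spherical cross-correlation as [ĥ⋆f] = ∫_{SO(3)} (h ⋆ f)(R) ρ(R) dμ(R). If f' (x) = f(R₀⁻¹x) is the rotated input, then [ĥ⋆f'] = ρ(R₀) · [ĥ⋆f]; i.e., each Fourier component of the spherical cross-correlation transforms covariantly, by left multiplication with ρ(R₀), under rotation of the input. -/

import Mathlib

open MeasureTheory Matrix ComplexConjugate

noncomputable section

/-- `SO(3)`: the group of real `3 × 3` special orthogonal matrices. -/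
abbrev SO3 := Matrix.specialOrthogonalGroup (Fin 3) ℝ

noncomputable instance : Group SO3 :=
  { (inferInstance : Monoid SO3) with
    inv := fun A => ⟨star A.1, by
      have h := Matrix.mem_specialOrthogonalGroup_iff.mp A.2
      refine Matrix.mem_specialOrthogonalGroup_iff.mpr ⟨?_, ?_⟩
      · exact Unitary.star_mem h.1
      · rw [Matrix.star_eq_conjTranspose, Matrix.det_conjTranspose, h.2]
        exact star_one ℝ⟩
    inv_mul_cancel := fun A => Subtype.ext ((Unitary.mem_iff.mp A.2.1).1) }

instance : MeasurableSpace SO3 := borel SO3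

/-- The unit sphere `S²` in `ℝ³`. -/
abbrev Sphere2 := Metric.sphere (0 : EuclideanSpace ℝ (Fin 3)) 1

/-- Action of a matrix on a euclidean vector by matrix–vector multiplication. -/
def mulVecPt (A : Matrix (Fin 3) (Fin 3) ℝ) (x : EuclideanSpace ℝ (Fin 3)) :
    EuclideanSpace ℝ (Fin 3) :=
  (EuclideanSpace.equiv (Fin 3) ℝ).symm (A.mulVec (EuclideanSpace.equiv (Fin 3) ℝ x))

lemma norm_mulVecPt (R : SO3) (x : EuclideanSpace ℝ (Fin 3)) :
    ‖mulVecPt R.1 x‖ = ‖x‖ := by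
  have horth : star R.1 * R.1 = 1 := (Unitary.mem_iff.mp R.2.1).1
  have key : ∀ y : EuclideanSpace ℝ (Fin 3), ‖y‖ ^ 2 = dotProduct
      (EuclideanSpace.equiv (Fin 3) ℝ y) (EuclideanSpace.equiv (Fin 3) ℝ y) := by
    intro y
    rw [← real_inner_self_eq_norm_sq]
    first
      | simp only [PiLp.inner_apply, dotProduct, mul_comm, RCLike.inner_apply, conj_trivial]; rfl
      | (rw [real_inner_self_eq_norm_sq, EuclideanSpace.norm_eq, Real.sq_sqrt (by positivity)]
         simp [dotProduct, sq])
  have h2 : ‖mulVecPt R.1 x‖ ^ 2 = ‖x‖ ^ 2 := by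
    rw [key, key]
    show dotProduct (R.1.mulVec _) (R.1.mulVec _) = _
    rw [Matrix.dotProduct_mulVec, ← Matrix.mulVec_transpose, Matrix.mulVec_mulVec]
    rw [show (R.1)ᵀ = star R.1 from rfl, horth, Matrix.one_mulVec]
  nlinarith [norm_nonneg (mulVecPt R.1 x), norm_nonneg x, h2]

/-- Rotation of a point of the sphere `S²` by an element of `SO(3)`:
`rotate R x = R · x`. -/
def rotate (R : SO3) (x : Sphere2) : Sphere2 :=
  ⟨mulVecPt R.1 x.1, by
    have h1 := norm_mulVecPt R x.1
    have hx : ‖(x : EuclideanSpace ℝ (Fin 3))‖ = 1 :=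
      mem_sphere_zero_iff_norm.mp x.2
    simp [mem_sphere_zero_iff_norm, h1, hx]⟩

/-- Spherical cross-correlation: `(h ⋆ f)(R) = ∫_{S²} conj (h (R⁻¹ x)) * f x dμS(x)`. -/
def xcorrS2 (μS : Measure Sphere2) (h f : Sphere2 → ℂ) (R : SO3) : ℂ :=
  ∫ x, conj (h (rotate R⁻¹ x)) * f x ∂μS

/-- Fourier matrix of `g : SO(3) → ℂ` with respect to a matrix-valued map `ρ`,
computed entrywise: `G = ∫ g(Q) ρ(Q) dμ(Q)`. -/
def fourierMatrix {n : ℕ} (μ : Measure SO3) (g : SO3 → ℂ)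
    (ρ : SO3 → Matrix (Fin n) (Fin n) ℂ) : Matrix (Fin n) (Fin n) ℂ :=
  Matrix.of fun i j => ∫ Q, g Q * ρ Q i j ∂μ

section AuxProof

instance : BorelSpace SO3 := ⟨rfl⟩

instance : FirstCountableTopology (Matrix (Fin 3) (Fin 3) ℝ) :=
  inferInstanceAs (FirstCountableTopology (Fin 3 → Fin 3 → ℝ))

instance : FirstCountableTopology SO3 :=
  inferInstanceAs (FirstCountableTopology
    (Matrix.specialOrthogonalGroup (Fin 3) ℝ : Set (Matrix (Fin 3) (Fin 3) ℝ)))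

lemma continuous_rotate2 : Continuous fun p : SO3 × Sphere2 => rotate p.1 p.2 := by
  apply Continuous.subtype_mk
  show Continuous fun p : SO3 × Sphere2 => mulVecPt p.1.1 p.2.1
  unfold mulVecPt
  exact (EuclideanSpace.equiv (Fin 3) ℝ).symm.continuous.comp <|
    Continuous.matrix_mulVec (continuous_subtype_val.comp continuous_fst)
      ((EuclideanSpace.equiv (Fin 3) ℝ).continuous.comp
        (continuous_subtype_val.comp continuous_snd))

lemma continuous_rotate_left (R : SO3) : Continuous (rotate R) :=
  continuous_rotate2.comp (continuous_const.prodMk continuous_id)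

lemma continuous_so3_inv : Continuous fun R : SO3 => R⁻¹ := by
  apply Continuous.subtype_mk
  exact continuous_subtype_val.matrix_conjTranspose

lemma continuous_so3_mul_left (g₀ : SO3) : Continuous fun x : SO3 => g₀ * x := by
  apply Continuous.subtype_mk
  exact (continuous_const.matrix_mul continuous_subtype_val)

lemma rotate_mul (R S : SO3) (x : Sphere2) : rotate R (rotate S x) = rotate (R * S) x := by
  apply Subtype.ext
  show mulVecPt R.1 (mulVecPt S.1 x.1) = mulVecPt (R * S).1 x.1
  unfold mulVecPt
  simp [Matrix.mulVec_mulVec]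
  rw [← Matrix.mulVec_mulVec]
  rfl

lemma rotate_one (x : Sphere2) : rotate 1 x = x := by
  apply Subtype.ext
  show mulVecPt (1 : SO3).1 x.1 = x.1
  unfold mulVecPt
  simp [Matrix.one_mulVec]

lemma rotate_inv_rotate (R : SO3) (x : Sphere2) : rotate R⁻¹ (rotate R x) = x := by
  rw [rotate_mul, inv_mul_cancel, rotate_one]

instance : CompactSpace SO3 := by
  have hsub : (Matrix.specialOrthogonalGroup (Fin 3) ℝ : Set (Matrix (Fin 3) (Fin 3) ℝ)) ⊆
      (Set.univ.pi fun _ : Fin 3 => Set.univ.pi fun _ : Fin 3 => Set.Icc (-1 : ℝ) 1) := by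
    intro A hA
    have horth : star A * A = 1 := ((Matrix.mem_specialOrthogonalGroup_iff.mp hA).1).1
    intro i _ j _
    have h1 : ∑ k, A k j * A k j = 1 := by
      have hd := congrArg (fun M : Matrix (Fin 3) (Fin 3) ℝ => M j j) horth
      simpa [Matrix.mul_apply, Matrix.star_apply, Matrix.one_apply] using hd
    have h2 : A i j * A i j ≤ 1 := by
      rw [← h1]
      exact Finset.single_le_sum (fun k _ => mul_self_nonneg (A k j)) (Finset.mem_univ i)
    constructor <;> nlinarith
  have hcl : IsClosed (Matrix.specialOrthogonalGroup (Fin 3) ℝ : Set (Matrix (Fin 3) (Fin 3) ℝ)) := by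
    have hset : (Matrix.specialOrthogonalGroup (Fin 3) ℝ : Set (Matrix (Fin 3) (Fin 3) ℝ)) =
        {A | star A * A = 1} ∩ {A | A * star A = 1} ∩ {A | A.det = 1} := by
      ext A
      simp only [Set.mem_inter_iff, Set.mem_setOf_eq, SetLike.mem_coe,
        Matrix.mem_specialOrthogonalGroup_iff]
      constructor
      · rintro ⟨hu, hdet⟩
        exact ⟨⟨(Unitary.mem_iff.mp hu).1, (Unitary.mem_iff.mp hu).2⟩, hdet⟩
      · rintro ⟨⟨h1, h2⟩, hdet⟩
        exact ⟨Unitary.mem_iff.mpr ⟨h1, h2⟩, hdet⟩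
    rw [hset]
    refine IsClosed.inter (IsClosed.inter ?_ ?_) ?_
    · exact isClosed_eq (continuous_star.matrix_mul continuous_id) continuous_const
    · exact isClosed_eq (continuous_id.matrix_mul continuous_star) continuous_const
    · exact isClosed_eq continuous_id.matrix_det continuous_const
  exact isCompact_iff_compactSpace.mp (IsCompact.of_isClosed_subset
    (isCompact_univ_pi fun _ => isCompact_univ_pi fun _ => isCompact_Icc) hcl hsub)

lemma cont_integrable {X E : Type*} [TopologicalSpace X] [CompactSpace X] [MeasurableSpace X]
    [OpensMeasurableSpace X] [T2Space X] [NormedAddCommGroup E] (ν : Measure X)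
    [IsFiniteMeasure ν] {g : X → E} (hg : Continuous g) : Integrable g ν :=
  hg.integrable_of_hasCompactSupport (HasCompactSupport.of_compactSpace g)

lemma exists_norm_bound {g : Sphere2 → ℂ} (hg : Continuous g) :
    ∃ C : ℝ, ∀ x, ‖g x‖ ≤ C := by
  obtain ⟨C, hC⟩ := IsCompact.exists_bound_of_continuousOn isCompact_univ hg.continuousOn
  exact ⟨C, fun x => hC x (Set.mem_univ x)⟩

lemma integral_rotate_sphere (μS : Measure Sphere2) (hμS : ∀ R : SO3, μS.map (rotate R) = μS)
    (R : SO3) {G : Sphere2 → ℂ} (hG : Continuous G) :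
    ∫ x, G x ∂μS = ∫ x, G (rotate R x) ∂μS := by
  conv_lhs => rw [← hμS R]
  exact integral_map (continuous_rotate_left R).measurable.aemeasurable
    ((hμS R).symm ▸ hG.aestronglyMeasurable)

lemma integral_so3_shift (μ : Measure SO3) (hμ : ∀ g₀ : SO3, μ.map (fun x => g₀ * x) = μ)
    (g₀ : SO3) {G : SO3 → ℂ} (hG : Continuous G) :
    ∫ Q, G Q ∂μ = ∫ Q, G (g₀ * Q) ∂μ := by
  conv_lhs => rw [← hμ g₀]
  exact integral_map (continuous_so3_mul_left g₀).measurable.aemeasurable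
    ((hμ g₀).symm ▸ hG.aestronglyMeasurable)

set_option synthInstance.maxHeartbeats 1000000 in
lemma continuous_xcorr (μS : Measure Sphere2) [IsFiniteMeasure μS] (h f : Sphere2 → ℂ)
    (hh : Continuous h) (hf : Continuous f) : Continuous (xcorrS2 μS h f) := by
  obtain ⟨C, hC⟩ := exists_norm_bound hh
  apply continuous_of_dominated (bound := fun x => C * ‖f x‖)
    (F := fun R x => conj (h (rotate R⁻¹ x)) * f x)
  · intro R
    exact (((continuous_star.comp (hh.comp (continuous_rotate_left R⁻¹))).mul
      hf)).aestronglyMeasurable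
  · intro R
    filter_upwards with x
    rw [norm_mul, RCLike.norm_conj]
    exact mul_le_mul_of_nonneg_right (hC _) (norm_nonneg _)
  · exact cont_integrable μS (continuous_const.mul hf.norm)
  · filter_upwards with x
    exact (continuous_star.comp (hh.comp (continuous_rotate2.comp
      (continuous_so3_inv.prodMk continuous_const)))).mul continuous_const

lemma xcorr_shift (μS : Measure Sphere2) (hμS : ∀ R : SO3, μS.map (rotate R) = μS)
    (h f : Sphere2 → ℂ) (hh : Continuous h) (hf : Continuous f) (R₀ Q : SO3) :
    xcorrS2 μS h (fun x => f (rotate R₀⁻¹ x)) Q = xcorrS2 μS h f (R₀⁻¹ * Q) := by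
  unfold xcorrS2
  rw [integral_rotate_sphere μS hμS R₀
    (G := fun x => conj (h (rotate Q⁻¹ x)) * f (rotate R₀⁻¹ x))
    (((continuous_star.comp (hh.comp (continuous_rotate_left Q⁻¹))).mul
      (hf.comp (continuous_rotate_left R₀⁻¹))))]
  refine integral_congr_ae (Filter.Eventually.of_forall fun x => ?_)
  simp only [rotate_mul, _root_.mul_inv_rev, inv_inv, inv_mul_cancel, rotate_one]

end AuxProof

/-- Each Fourier component of the spherical cross-correlation transforms
covariantly, by left multiplication with `ρ(R₀)`, under rotation of the input. -/
theorem fourierMatrix_xcorrS2_covariant {n : ℕ}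
    (μS : Measure Sphere2) [IsFiniteMeasure μS]
    (hμS : ∀ R : SO3, μS.map (rotate R) = μS)
    (μ : Measure SO3) [IsProbabilityMeasure μ]
    (hμ : ∀ g₀ : SO3, μ.map (fun x => g₀ * x) = μ)
    (f h : Sphere2 → ℂ) (hf : Continuous f) (hh : Continuous h)
    (ρ : SO3 →* Matrix.GeneralLinearGroup (Fin n) ℂ)
    (hρ : Continuous fun Q : SO3 => (ρ Q : Matrix (Fin n) (Fin n) ℂ))
    (R₀ : SO3) :
    fourierMatrix μ (xcorrS2 μS h (fun x => f (rotate R₀⁻¹ x)))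
        (fun Q => (ρ Q : Matrix (Fin n) (Fin n) ℂ))
      = (ρ R₀ : Matrix (Fin n) (Fin n) ℂ) *
        fourierMatrix μ (xcorrS2 μS h f) (fun Q => (ρ Q : Matrix (Fin n) (Fin n) ℂ)) := by
  have hgc : Continuous (xcorrS2 μS h f) := continuous_xcorr μS h f hh hf
  ext i j
  show (∫ Q, xcorrS2 μS h (fun x => f (rotate R₀⁻¹ x)) Q * (ρ Q : Matrix (Fin n) (Fin n) ℂ) i j ∂μ)
    = ((ρ R₀ : Matrix (Fin n) (Fin n) ℂ) *
        Matrix.of fun i j => ∫ Q, xcorrS2 μS h f Q * (ρ Q : Matrix (Fin n) (Fin n) ℂ) i j ∂μ) i j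
  have step1 : (∫ Q, xcorrS2 μS h (fun x => f (rotate R₀⁻¹ x)) Q *
      (ρ Q : Matrix (Fin n) (Fin n) ℂ) i j ∂μ)
      = ∫ Q, xcorrS2 μS h f (R₀⁻¹ * Q) * (ρ Q : Matrix (Fin n) (Fin n) ℂ) i j ∂μ := by
    refine integral_congr_ae (Filter.Eventually.of_forall fun Q => ?_)
    simp only [xcorr_shift μS hμS h f hh hf R₀]
  rw [step1]
  have hcont : Continuous fun Q : SO3 =>
      xcorrS2 μS h f (R₀⁻¹ * Q) * (ρ Q : Matrix (Fin n) (Fin n) ℂ) i j :=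
    (hgc.comp (continuous_so3_mul_left R₀⁻¹)).mul (hρ.matrix_elem i j)
  rw [integral_so3_shift μ hμ R₀ hcont]
  have step2 : (∫ Q, xcorrS2 μS h f (R₀⁻¹ * (R₀ * Q)) *
      (ρ (R₀ * Q) : Matrix (Fin n) (Fin n) ℂ) i j ∂μ)
      = ∫ Q, ∑ k, (ρ R₀ : Matrix (Fin n) (Fin n) ℂ) i k *
          (xcorrS2 μS h f Q * (ρ Q : Matrix (Fin n) (Fin n) ℂ) k j) ∂μ := by
    refine integral_congr_ae (Filter.Eventually.of_forall fun Q => ?_)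
    simp only [inv_mul_cancel_left, _root_.map_mul, Units.val_mul, Matrix.mul_apply, Finset.mul_sum]
    refine Finset.sum_congr rfl fun k _ => by ring
  rw [step2]
  rw [integral_finset_sum _ (f := fun k Q => (ρ R₀ : Matrix (Fin n) (Fin n) ℂ) i k *
      (xcorrS2 μS h f Q * (ρ Q : Matrix (Fin n) (Fin n) ℂ) k j)) (fun k _ =>
    (cont_integrable μ (hgc.mul (hρ.matrix_elem k j))).const_mul _)]
  rw [Matrix.mul_apply]
  refine Finset.sum_congr rfl fun k _ => ?_
  rw [integral_const_mul]
  rfl
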